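/- Suppose U₁U₂ < 0, x₁ < x₂, and x₂ - x₁ > 1/U₁ + 1/U₂. Then the equation (2z - U₁)(2z - U₂) = U₁U₂·e^{2(x₁-x₂)z} has exactly one solution z > 0. -/

import Mathlib

/-!
Put `r = 2 (x₁ - x₂)` and `f z = (2z - U₁)(2z - U₂) - U₁U₂ e^{rz}`, so that the solutions are the
zeros of `f`. Since `U₁U₂ < 0`, `f'' = 8 - U₁U₂ r² e^{rz} > 0`, so `f` is strictly convex, and a
strictly convex function vanishing at `0` has at most one positive zero. The hypothesis on
`x₂ - x₁` says exactly that `f'(0) = 2U₁U₂(x₂ - x₁) - 2(U₁ + U₂) < 0`, so `f` is negative just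
to the right of `0`; it is positive for large `z`, and the intermediate value theorem gives the zero.
-/

open Set

theorem exists_gt_lt_zero_of_deriv_neg {f : ℝ → ℝ} {x₀ : ℝ} (hf : deriv f x₀ < 0)
    (hx : f x₀ = 0) : ∃ x, x₀ < x ∧ f x < 0 := by
  have hsign := eventually_nhdsWithin_sign_eq_of_deriv_neg hf hx
  obtain ⟨x, hx_sign, hx_gt⟩ :=
    ((hsign.filter_mono nhdsWithin_le_nhds).and (self_mem_nhdsWithin (s := Ioi x₀))).exists
  refine ⟨x, hx_gt, ?_⟩
  rwa [sign_eq_neg_one_iff.mpr (sub_neg.mpr hx_gt), sign_eq_neg_one_iff] at hx_sign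

theorem StrictConvexOn.existsUnique_pos_eq_zero {f : ℝ → ℝ}
    (hconv : StrictConvexOn ℝ (Ici 0) f) (hcont : ContinuousOn f (Ici 0)) (h0 : f 0 = 0)
    {a b : ℝ} (ha : 0 < a) (hfa : f a < 0) (hb : 0 < b) (hfb : 0 < f b) :
    ∃! z, 0 < z ∧ f z = 0 := by
  have hab : uIcc a b ⊆ Ici 0 := fun z hz => le_trans (le_min ha.le hb.le) hz.1
  obtain ⟨z, hz, hfz⟩ := intermediate_value_uIcc (hcont.mono hab) ⟨min_le_of_left_le hfa.le,
    le_max_of_le_right hfb.le⟩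
  have hz_pos : 0 < z := lt_of_lt_of_le (lt_min ha hb) hz.1
  refine ⟨z, ⟨hz_pos, hfz⟩, ?_⟩
  have no_smaller_zero : ∀ p q, 0 < p → p < q → f q = 0 → f p ≠ 0 := fun p q hp hpq hfq => by
    have hseg : p ∈ openSegment ℝ 0 q := by rw [openSegment_eq_Ioo (hp.trans hpq)]; exact ⟨hp, hpq⟩
    have := hconv.lt_on_openSegment self_mem_Ici (hp.trans hpq).le (hp.trans hpq).ne hseg
    rw [h0, hfq, max_self] at this
    exact this.ne
  rintro y ⟨hy_pos, hfy⟩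
  rcases lt_trichotomy y z with hyz | rfl | hzy
  · exact absurd hfy (no_smaller_zero y z hy_pos hyz hfz)
  · rfl
  · exact absurd hfz (no_smaller_zero z y hz_pos hzy hfy)

noncomputable def boundStateFn (U₁ U₂ r z : ℝ) : ℝ :=
  (2 * z - U₁) * (2 * z - U₂) - U₁ * U₂ * Real.exp (r * z)

section boundStateFn

variable (U₁ U₂ r : ℝ)

theorem boundStateFn_zero : boundStateFn U₁ U₂ r 0 = 0 := by
  simp [boundStateFn]

theorem continuous_boundStateFn : Continuous (boundStateFn U₁ U₂ r) := by
  unfold boundStateFn; fun_prop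

theorem hasDerivAt_boundStateFn (z : ℝ) :
    HasDerivAt (boundStateFn U₁ U₂ r)
      (8 * z - 2 * (U₁ + U₂) - U₁ * U₂ * r * Real.exp (r * z)) z := by
  have hexp := (hasDerivAt_const_mul r).exp.const_mul (U₁ * U₂) (x := z)
  have hlin (U : ℝ) : HasDerivAt (fun z => 2 * z - U) 2 z := (hasDerivAt_const_mul 2).sub_const U
  exact (((hlin U₁).mul (hlin U₂)).sub hexp).congr_deriv (by ring)

theorem deriv_boundStateFn :
    deriv (boundStateFn U₁ U₂ r) =
      fun z => 8 * z - 2 * (U₁ + U₂) - U₁ * U₂ * r * Real.exp (r * z) :=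
  funext fun z => (hasDerivAt_boundStateFn U₁ U₂ r z).deriv

theorem strictConvexOn_boundStateFn (hU : U₁ * U₂ ≤ 0) :
    StrictConvexOn ℝ univ (boundStateFn U₁ U₂ r) := by
  refine strictConvexOn_of_deriv2_pos' convex_univ (continuous_boundStateFn U₁ U₂ r).continuousOn
    fun z _ => ?_
  have hderiv2 : HasDerivAt (deriv (boundStateFn U₁ U₂ r))
      (8 - U₁ * U₂ * r * (r * Real.exp (r * z))) z := by
    rw [deriv_boundStateFn]
    have hexp := (hasDerivAt_const_mul r).exp.const_mul (U₁ * U₂ * r) (x := z)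
    exact (((hasDerivAt_const_mul 8).sub_const (2 * (U₁ + U₂))).sub hexp).congr_deriv (by ring)
  rw [Function.iterate_succ_apply, Function.iterate_one, hderiv2.deriv]
  have : 0 ≤ -(U₁ * U₂) * (r * r * Real.exp (r * z)) :=
    mul_nonneg (neg_nonneg.mpr hU) (mul_nonneg (mul_self_nonneg r) (Real.exp_pos _).le)
  linarith

theorem boundStateFn_pos (hU : U₁ * U₂ ≤ 0) {z : ℝ} (h₁ : U₁ < 2 * z) (h₂ : U₂ < 2 * z) :
    0 < boundStateFn U₁ U₂ r z := by
  have : 0 ≤ -(U₁ * U₂) * Real.exp (r * z) := mul_nonneg (neg_nonneg.mpr hU) (Real.exp_pos _).le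
  have := mul_pos (sub_pos.mpr h₁) (sub_pos.mpr h₂)
  unfold boundStateFn; linarith

end boundStateFn

theorem one_bound_state_mixed_general (U₁ U₂ x₁ x₂ : ℝ) (hU : U₁ * U₂ < 0)
    (hx' : x₂ - x₁ > 1 / U₁ + 1 / U₂) :
    ∃! z : ℝ, 0 < z ∧
      (2 * z - U₁) * (2 * z - U₂) = U₁ * U₂ * Real.exp (2 * (x₁ - x₂) * z) := by
  set f := boundStateFn U₁ U₂ (2 * (x₁ - x₂))
  have hU₁ : U₁ ≠ 0 := by rintro rfl; simp at hU
  have hU₂ : U₂ ≠ 0 := by rintro rfl; simp at hU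
  have hslope : deriv f 0 < 0 := by
    have hsum : U₁ * U₂ * (1 / U₁ + 1 / U₂) = U₁ + U₂ := by field_simp; ring
    have := mul_lt_mul_of_neg_left hx' hU
    simp only [f, deriv_boundStateFn, mul_zero, Real.exp_zero]
    linarith
  obtain ⟨a, ha, hfa⟩ := exists_gt_lt_zero_of_deriv_neg hslope (boundStateFn_zero _ _ _)
  have hb : U₁ < 2 * (|U₁| + |U₂| + 1) ∧ U₂ < 2 * (|U₁| + |U₂| + 1) := by
    constructor <;> linarith [le_abs_self U₁, le_abs_self U₂, abs_nonneg U₁, abs_nonneg U₂]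
  have := ((strictConvexOn_boundStateFn _ _ _ hU.le).subset (subset_univ _) (convex_Ici 0))
    |>.existsUnique_pos_eq_zero (continuous_boundStateFn _ _ _).continuousOn
      (boundStateFn_zero _ _ _) ha hfa (by positivity) (boundStateFn_pos _ _ _ hU.le hb.1 hb.2)
  simpa only [f, boundStateFn, sub_eq_zero] using this

/-- If `U₁U₂ < 0`, `x₁ < x₂` and `x₂ - x₁ > 1/U₁ + 1/U₂`, then the equation
`(2z - U₁)(2z - U₂) = U₁U₂·e^{2(x₁-x₂)z}` has exactly one positive solution. -/
theorem one_bound_state_mixed (U₁ U₂ x₁ x₂ : ℝ) (hU : U₁ * U₂ < 0)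
    (hx : x₁ < x₂) (hx' : x₂ - x₁ > 1 / U₁ + 1 / U₂) :
    ∃! z : ℝ, 0 < z ∧
      (2 * z - U₁) * (2 * z - U₂) = U₁ * U₂ * Real.exp (2 * (x₁ - x₂) * z) :=
  one_bound_state_mixed_general U₁ U₂ x₁ x₂ hU hx'
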